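/- Let {P_n}_{n∈I} be a complete family of mutually orthogonal projections on a Hilbert space. For bounded operators A, B with ‖A‖₂ < ∞ and ‖B‖₁ < ∞, it holds ‖AB‖₁ ≤ K ‖A‖₂ ‖B‖₁, where K = 3 + 2ζ(2). -/

import Mathlib

open Real

/-- `⟨a⟩ := max (1, |a|)` for an integer `a`, as a real number. -/
noncomputable def jap (a : ℤ) : ℝ := max 1 |(a : ℝ)|

/-!
Writing `P n (A B) P m = ∑ₖ (P n A P k) (P k B P m)` and bounding the blocks by the weighted
norms reduces the theorem to `∑ⱼ ⟨d⟩ / (⟨j⟩² ⟨j - d⟩) ≤ 3 + 2ζ(2)` uniformly in `d ∈ ℤ`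
(with `d = n - m`, `j = n - k`). By symmetry `d ≥ 0`. If `|j - d| ≥ d` the summand is at most
`1 / ⟨j⟩²`, and these sum to `1 + 2ζ(2)` over `ℤ`. Otherwise `0 < j < 2d`: for `j < d` the summand
is `1/j² + 1/(j(d - j)) ≤ 1/j² + 1/(d - 1)` because `j(d - j) ≥ d - 1`, and for `j ≥ d` it is at
most `d/j² ≤ 1/d`; each of these two ranges therefore adds at most `1`.
-/

open Finset

lemma one_le_jap (a : ℤ) : 1 ≤ jap a := le_max_left _ _

lemma jap_pos (a : ℤ) : 0 < jap a := one_pos.trans_le (one_le_jap a)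

lemma abs_le_jap (a : ℤ) : |(a : ℝ)| ≤ jap a := le_max_right _ _

lemma jap_zero : jap 0 = 1 := by simp [jap]

lemma jap_neg (a : ℤ) : jap (-a) = jap a := by simp [jap]

lemma jap_sub_comm (a b : ℤ) : jap (a - b) = jap (b - a) := by rw [← neg_sub, jap_neg]

lemma jap_of_one_le {a : ℤ} (h : 1 ≤ a) : jap a = a := by
  have : (1 : ℝ) ≤ a := by exact_mod_cast h
  rw [jap, abs_of_nonneg (by linarith), max_eq_right this]

lemma hasSum_one_div_jap_sq : HasSum (fun j : ℤ => 1 / jap j ^ 2) (1 + 2 * (π ^ 2 / 6)) := by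
  have hpos : HasSum (fun n : ℕ => 1 / ((n : ℝ) + 1) ^ 2) (π ^ 2 / 6) := by
    simpa using (hasSum_nat_add_iff' 1).mpr hasSum_zeta_two
  have hjap : ∀ n : ℕ, jap ((n : ℤ) + 1) = (n : ℝ) + 1 := fun n => by
    rw [jap_of_one_le (by omega)]; push_cast; ring
  have := HasSum.of_add_one_of_neg_add_one (f := fun j : ℤ => 1 / jap j ^ 2)
    (by simpa only [hjap] using hpos) (by simpa only [jap_neg, hjap] using hpos)
  convert this using 1
  rw [jap_zero]
  ring

noncomputable def japKernel (d j : ℤ) : ℝ := jap d / (jap j ^ 2 * jap (j - d))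

lemma japKernel_nonneg (d j : ℤ) : 0 ≤ japKernel d j := by
  have := jap_pos d; have := jap_pos j; have := jap_pos (j - d)
  unfold japKernel; positivity

lemma japKernel_neg (d j : ℤ) : japKernel (-d) (-j) = japKernel d j := by
  simp only [japKernel, jap_neg, ← neg_sub', jap_neg]

lemma japKernel_sub_sub (a b k : ℤ) :
    japKernel (a - b) (a - k) = jap (a - b) / (jap (a - k) ^ 2 * jap (k - b)) := by
  rw [japKernel, sub_sub_sub_cancel_left, jap_sub_comm b k]

lemma japKernel_le_one_div_jap_sq {d j : ℤ} (h : jap d ≤ jap (j - d)) :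
    japKernel d j ≤ 1 / jap j ^ 2 := by
  have := jap_pos j
  rw [japKernel, mul_comm, ← div_div, div_le_div_iff_of_pos_right (by positivity)]
  exact (div_le_one (jap_pos _)).mpr h

noncomputable def japKernelMajorant (d : ℕ) (j : ℤ) : ℝ :=
  1 / jap j ^ 2 + (if j ∈ Ioo 0 (d : ℤ) then ((d - 1 : ℕ) : ℝ)⁻¹ else 0) +
    (if j ∈ Ico (d : ℤ) (2 * d) then (d : ℝ)⁻¹ else 0)

lemma hasSum_ite_mem {α β : Type*} [AddCommMonoid α] [TopologicalSpace α] [DecidableEq β]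
    (s : Finset β) (c : α) : HasSum (fun j => if j ∈ s then c else 0) (#s • c) := by
  have h := hasSum_sum_of_ne_finset_zero (L := .unconditional β) (s := s)
    (f := fun j => if j ∈ s then c else 0) fun j hj => if_neg hj
  rwa [sum_ite_of_true fun _ h => h, sum_const] at h

lemma exists_hasSum_japKernelMajorant_le (d : ℕ) :
    ∃ s ≤ 3 + 2 * (π ^ 2 / 6), HasSum (japKernelMajorant d) s := by
  refine ⟨_, ?_, (hasSum_one_div_jap_sq.add (hasSum_ite_mem _ _)).add (hasSum_ite_mem _ _)⟩
  have hIoo : #(Ioo (0 : ℤ) d) = d - 1 := by rw [Int.card_Ioo]; omega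
  have hIco : #(Ico (d : ℤ) (2 * d)) = d := by rw [Int.card_Ico]; omega
  rw [hIoo, hIco, nsmul_eq_mul, nsmul_eq_mul]
  linarith [mul_inv_le_one (a := ((d - 1 : ℕ) : ℝ)), mul_inv_le_one (a := (d : ℝ))]

lemma pos_and_lt_two_mul_of_jap_sub_lt {d : ℕ} {j : ℤ} (h : jap (j - d) < jap d) :
    0 < j ∧ j < 2 * d := by
  have hd : 1 ≤ (d : ℤ) := by
    by_contra! hd0
    obtain rfl : d = 0 := by omega
    exact h.not_ge (by simpa [jap_zero] using one_le_jap _)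
  rw [jap_of_one_le hd] at h
  have hjd := abs_lt.mp ((abs_le_jap _).trans_lt h)
  push_cast at hjd
  have h0 : (0 : ℝ) < j := by linarith
  have h2 : (j : ℝ) < 2 * d := by linarith
  exact ⟨by exact_mod_cast h0, by exact_mod_cast h2⟩

lemma japKernel_le_of_pos_of_lt {d : ℕ} {j : ℤ} (h0 : 0 < j) (hjd : j < d) :
    japKernel d j ≤ 1 / jap j ^ 2 + ((d - 1 : ℕ) : ℝ)⁻¹ := by
  rw [japKernel, jap_of_one_le h0, jap_of_one_le (by omega : 1 ≤ (d : ℤ)), jap_sub_comm,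
    jap_of_one_le (by omega : 1 ≤ (d : ℤ) - j), Nat.cast_sub (by omega : 1 ≤ d)]
  have hx : (1 : ℝ) ≤ j := by exact_mod_cast h0
  have hxd : (j : ℝ) + 1 ≤ d := by exact_mod_cast (show j + 1 ≤ d by omega)
  push_cast
  have hdx : (d : ℝ) - j ≠ 0 := by linarith
  have hsplit : (d : ℝ) / ((j : ℝ) ^ 2 * (d - j)) = 1 / (j : ℝ) ^ 2 + 1 / (j * (d - j)) := by
    field_simp
    ring
  rw [hsplit, inv_eq_one_div]
  gcongr
  · linarith
  · nlinarith

lemma japKernel_le_inv_of_le {d : ℕ} {j : ℤ} (hd : 0 < d) (hdj : (d : ℤ) ≤ j) :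
    japKernel d j ≤ (d : ℝ)⁻¹ := by
  rw [japKernel, jap_of_one_le (by omega : 1 ≤ (d : ℤ)), jap_of_one_le (by omega : 1 ≤ j)]
  have hdj' : (d : ℝ) ≤ j := by exact_mod_cast hdj
  have hd' : (0 : ℝ) < d := by exact_mod_cast hd
  have hj2 : (0 : ℝ) < (j : ℝ) ^ 2 := by have : (0 : ℝ) < j := hd'.trans_le hdj'; positivity
  calc (d : ℝ) / ((j : ℝ) ^ 2 * jap (j - d)) ≤ d / (j : ℝ) ^ 2 :=
        div_le_div_of_nonneg_left hd'.le hj2 (le_mul_of_one_le_right hj2.le (one_le_jap _))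
    _ ≤ (d : ℝ)⁻¹ := by
        rw [div_le_iff₀ hj2, inv_mul_eq_div, le_div_iff₀ hd']
        nlinarith

lemma japKernel_le_majorant (d : ℕ) (j : ℤ) : japKernel d j ≤ japKernelMajorant d j := by
  have hsq : 0 ≤ 1 / jap j ^ 2 := by have := jap_pos j; positivity
  have hmid : 0 ≤ if j ∈ Ioo 0 (d : ℤ) then ((d - 1 : ℕ) : ℝ)⁻¹ else 0 := by
    split_ifs <;> positivity
  have hup : 0 ≤ if j ∈ Ico (d : ℤ) (2 * d) then (d : ℝ)⁻¹ else 0 := by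
    split_ifs <;> positivity
  unfold japKernelMajorant
  by_cases h : jap d ≤ jap (j - d)
  · linarith [japKernel_le_one_div_jap_sq h]
  obtain ⟨hj0, hj2⟩ := pos_and_lt_two_mul_of_jap_sub_lt (not_le.mp h)
  rcases lt_or_ge j d with hlt | hge
  · rw [if_pos (mem_Ioo.2 ⟨hj0, hlt⟩), if_neg (by simp only [mem_Ico]; omega)]
    linarith [japKernel_le_of_pos_of_lt hj0 hlt]
  · rw [if_neg (by simp only [mem_Ioo]; omega), if_pos (mem_Ico.2 ⟨hge, hj2⟩)]
    linarith [japKernel_le_inv_of_le (by omega) hge]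

lemma exists_hasSum_japKernel_natCast_le (d : ℕ) :
    ∃ s ≤ 3 + 2 * (π ^ 2 / 6), HasSum (japKernel d) s := by
  obtain ⟨s, hs, hsum⟩ := exists_hasSum_japKernelMajorant_le d
  have hk : Summable (japKernel d) :=
    hsum.summable.of_nonneg_of_le (japKernel_nonneg d) (japKernel_le_majorant d)
  exact ⟨_, (hasSum_le (japKernel_le_majorant d) hk.hasSum hsum).trans hs, hk.hasSum⟩

lemma exists_hasSum_japKernel_le (d : ℤ) :
    ∃ s ≤ 3 + 2 * (π ^ 2 / 6), HasSum (japKernel d) s := by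
  obtain ⟨n, rfl | rfl⟩ := d.eq_nat_or_neg
  · exact exists_hasSum_japKernel_natCast_le n
  · obtain ⟨s, hs, hsum⟩ := exists_hasSum_japKernel_natCast_le n
    refine ⟨s, hs, (Equiv.neg ℤ).hasSum_iff.mp ?_⟩
    simpa [Function.comp_def, japKernel_neg] using hsum

lemma summable_japKernel_sub_natCast (d a : ℤ) : Summable fun k : ℕ => japKernel d (a - k) := by
  obtain ⟨s, -, hsum⟩ := exists_hasSum_japKernel_le d
  exact hsum.summable.comp_injective fun k l h => by simpa using h

lemma tsum_japKernel_sub_natCast_le (d a : ℤ) :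
    ∑' k : ℕ, japKernel d (a - k) ≤ 3 + 2 * (π ^ 2 / 6) := by
  obtain ⟨s, hs, hsum⟩ := exists_hasSum_japKernel_le d
  calc ∑' k : ℕ, japKernel d (a - k) ≤ ∑' j, japKernel d j :=
        tsum_comp_le_tsum_of_inj hsum.summable (japKernel_nonneg d) fun k l h => by simpa using h
    _ ≤ _ := hsum.tsum_eq ▸ hs

lemma le_ciSup_mul_div {ι : Type*} {w g : ι → ℝ} (hw : ∀ i, 0 < w i)
    (h : BddAbove (Set.range fun i => w i * g i)) (i : ι) : g i ≤ (⨆ i, w i * g i) / w i := by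
  rw [le_div_iff₀ (hw i), mul_comm]
  exact le_ciSup h i

namespace ContinuousLinearMap

variable {ι 𝕜 E F G : Type*} [NontriviallyNormedField 𝕜]
  [SeminormedAddCommGroup E] [SeminormedAddCommGroup F] [SeminormedAddCommGroup G]
  [NormedSpace 𝕜 E] [NormedSpace 𝕜 F] [NormedSpace 𝕜 G]

lemma opNorm_le_of_hasSum_apply {S : ι → E →L[𝕜] F} {T : E →L[𝕜] F} {c : ι → ℝ} {b : ℝ}
    (hT : ∀ x, HasSum (fun i => S i x) (T x)) (hc : HasSum c b) (hS : ∀ i, ‖S i‖ ≤ c i) :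
    ‖T‖ ≤ b :=
  T.opNorm_le_bound (hc.nonneg fun i => (norm_nonneg _).trans (hS i)) fun x =>
    (hT x).norm_le_of_bounded (hc.mul_right ‖x‖) fun i => (S i).le_of_opNorm_le (hS i) x

lemma hasSum_comp_idempotent_comp {P : ι → E →L[𝕜] E} (hP : ∀ i, IsIdempotentElem (P i))
    (hsum : ∀ x, HasSum (fun i => P i x) x) (A : E →L[𝕜] F) (B : G →L[𝕜] E) (x : G) :
    HasSum (fun i => ((A ∘L P i) ∘L (P i ∘L B)) x) ((A ∘L B) x) := by
  have hPP (i : ι) : P i (P i (B x)) = P i (B x) := DFunLike.congr_fun (hP i).eq (B x)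
  simpa only [comp_apply, hPP] using A.hasSum (hsum (B x))

lemma opNorm_comp_le_tsum_of_idempotent {P : ι → E →L[𝕜] E} (hP : ∀ i, IsIdempotentElem (P i))
    (hsum : ∀ x, HasSum (fun i => P i x) x) (A : E →L[𝕜] F) (B : G →L[𝕜] E) {c : ι → ℝ}
    (hc : Summable c) (hAB : ∀ i, ‖A ∘L P i‖ * ‖P i ∘L B‖ ≤ c i) : ‖A ∘L B‖ ≤ ∑' i, c i :=
  opNorm_le_of_hasSum_apply (hasSum_comp_idempotent_comp hP hsum A B) hc.hasSum fun i =>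
    (opNorm_comp_le _ _).trans (hAB i)

end ContinuousLinearMap

theorem weighted_norm_product_bound_general
    {H : Type*} [NormedAddCommGroup H] [InnerProductSpace ℂ H] [CompleteSpace H]
    (P : ℕ → H →L[ℂ] H)
    (hproj : ∀ n, IsIdempotentElem (P n) ∧ IsSelfAdjoint (P n))
    (hcomplete : ∀ x : H, HasSum (fun n => P n x) x)
    (A B : H →L[ℂ] H)
    (hA : BddAbove (Set.range fun p : ℕ × ℕ =>
      jap ((p.1 : ℤ) - p.2) ^ 2 * ‖P p.1 ∘L A ∘L P p.2‖))
    (hB : BddAbove (Set.range fun p : ℕ × ℕ =>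
      jap ((p.1 : ℤ) - p.2) * ‖P p.1 ∘L B ∘L P p.2‖)) :
    ∀ n m : ℕ, jap ((n : ℤ) - m) * ‖P n ∘L (A ∘L B) ∘L P m‖ ≤
      (3 + 2 * (π ^ 2 / 6)) *
        ((⨆ p : ℕ × ℕ, jap ((p.1 : ℤ) - p.2) ^ 2 * ‖P p.1 ∘L A ∘L P p.2‖) *
          (⨆ p : ℕ × ℕ, jap ((p.1 : ℤ) - p.2) * ‖P p.1 ∘L B ∘L P p.2‖)) := by
  intro n m
  set NA := ⨆ p : ℕ × ℕ, jap ((p.1 : ℤ) - p.2) ^ 2 * ‖P p.1 ∘L A ∘L P p.2‖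
  set NB := ⨆ p : ℕ × ℕ, jap ((p.1 : ℤ) - p.2) * ‖P p.1 ∘L B ∘L P p.2‖
  have hNA : 0 ≤ NA := Real.iSup_nonneg fun p => by have := jap_pos (p.1 - p.2); positivity
  have hNB : 0 ≤ NB := Real.iSup_nonneg fun p => by have := jap_pos (p.1 - p.2); positivity
  have hAblock (a b : ℕ) := le_ciSup_mul_div (fun p => pow_pos (jap_pos _) 2) hA (a, b)
  have hBblock (a b : ℕ) := le_ciSup_mul_div (fun p => jap_pos _) hB (a, b)
  have hT : ‖P n ∘L (A ∘L B) ∘L P m‖ ≤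
      ∑' k : ℕ, NA * NB / jap (n - m) * japKernel (n - m) (n - k) := by
    refine ContinuousLinearMap.opNorm_comp_le_tsum_of_idempotent (fun k => (hproj k).1) hcomplete
      (P n ∘L A) (B ∘L P m) ((summable_japKernel_sub_natCast _ _).mul_left _) fun k => ?_
    have := jap_pos (n - k); have := jap_pos (k - m); have := jap_pos (n - m)
    calc _ ≤ NA / jap (n - k) ^ 2 * (NB / jap (k - m)) :=
          mul_le_mul (hAblock n k) (hBblock k m) (norm_nonneg _) (by positivity)
      _ = _ := by rw [japKernel_sub_sub]; field_simp
  rw [tsum_mul_left] at hT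
  have := jap_pos (n - m)
  calc jap (n - m) * ‖P n ∘L (A ∘L B) ∘L P m‖
      ≤ jap (n - m) * (NA * NB / jap (n - m) * ∑' k : ℕ, japKernel (n - m) (n - k)) := by gcongr
    _ = NA * NB * ∑' k : ℕ, japKernel (n - m) (n - k) := by field_simp
    _ ≤ NA * NB * (3 + 2 * (π ^ 2 / 6)) := by
        gcongr
        exact tsum_japKernel_sub_natCast_le _ _
    _ = _ := by ring

/-- Let `{P n}` be a complete family of mutually orthogonal projections on a complex
Hilbert space. For bounded operators `A, B` with `‖A‖₂ < ∞` and `‖B‖₁ < ∞` it holds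
`‖AB‖₁ ≤ K ‖A‖₂ ‖B‖₁` where `K = 3 + 2ζ(2)`. The norms `‖·‖_l` are the suprema of
`⟨n-m⟩^l ‖P n · P m‖`; finiteness is expressed by `BddAbove`, and the bound on
`‖AB‖₁` is expressed blockwise (equivalently, as a bound on the supremum). -/
theorem weighted_norm_product_bound
    {H : Type*} [NormedAddCommGroup H] [InnerProductSpace ℂ H] [CompleteSpace H]
    (P : ℕ → H →L[ℂ] H)
    (hproj : ∀ n, IsIdempotentElem (P n) ∧ IsSelfAdjoint (P n))
    (horth : ∀ n m, n ≠ m → P n ∘L P m = 0)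
    (hcomplete : ∀ x : H, HasSum (fun n => P n x) x)
    (A B : H →L[ℂ] H)
    (hA : BddAbove (Set.range fun p : ℕ × ℕ =>
      jap ((p.1 : ℤ) - p.2) ^ 2 * ‖P p.1 ∘L A ∘L P p.2‖))
    (hB : BddAbove (Set.range fun p : ℕ × ℕ =>
      jap ((p.1 : ℤ) - p.2) * ‖P p.1 ∘L B ∘L P p.2‖)) :
    ∀ n m : ℕ, jap ((n : ℤ) - m) * ‖P n ∘L (A ∘L B) ∘L P m‖ ≤
      (3 + 2 * (π ^ 2 / 6)) *
        ((⨆ p : ℕ × ℕ, jap ((p.1 : ℤ) - p.2) ^ 2 * ‖P p.1 ∘L A ∘L P p.2‖) *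
          (⨆ p : ℕ × ℕ, jap ((p.1 : ℤ) - p.2) * ‖P p.1 ∘L B ∘L P p.2‖)) :=
  weighted_norm_product_bound_general P hproj hcomplete A B hA hB
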